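/- arXiv:1402.6209 — 2 statements merged into one kernel-verified Lean document; each statement's English description precedes it below -/
import Mathlib

section
/- The X-ray transform on the torus is injective on continuous functions: if f : 𝕋^n → ℂ is continuous (n ≥ 2) and ∫₀¹ f(x + tv) dt = 0 for every x ∈ 𝕋^n and every nonzero v ∈ ℤ^n, then f = 0. -/
/-!
Lift `f` to a continuous function `F` on the torus. Given a frequency `k ∈ ℤⁿ`, pick `v ≠ 0`
in `ℤⁿ` with `k ⬝ᵥ v = 0`, which is possible because `n ≥ 2`. The character `e_k` is then
constant along the closed geodesics `t ↦ x + t v`, so by translation invariance and Fubini the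
Fourier coefficient `∫ e_k F` equals `∫ e_k(x) (∫₀¹ F(x + t v) dt) dx = 0`. Trigonometric
polynomials are dense in `C(𝕋ⁿ, ℂ)` (Stone–Weierstrass), so `F` is orthogonal in `L²` to
itself, hence `F = 0`.
-/

open MeasureTheory Real

open scoped ComplexConjugate Matrix

namespace ContinuousMap

variable {X 𝕜 : Type*} [TopologicalSpace X] [CompactSpace X] [MeasurableSpace X]
  [BorelSpace X] [RCLike 𝕜] (μ : Measure X) [IsFiniteMeasure μ] [μ.IsOpenPosMeasure]

theorem eq_zero_of_forall_integral_mul_conj_eq_zero {s : Set C(X, 𝕜)}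
    (hs : (Submodule.span 𝕜 s).topologicalClosure = ⊤) {f : C(X, 𝕜)}
    (hf : ∀ g ∈ s, ∫ x, g x * conj (f x) ∂μ = 0) : f = 0 := by
  set φ : C(X, 𝕜) →L[𝕜] 𝕜 := innerSL 𝕜 (toLp 2 μ 𝕜 f) ∘L toLp 2 μ 𝕜
  have hker : (Submodule.span 𝕜 s).topologicalClosure ≤ (φ : C(X, 𝕜) →ₗ[𝕜] 𝕜).ker :=
    Submodule.topologicalClosure_minimal _
      (Submodule.span_le.2 fun g hg => (ContinuousMap.inner_toLp μ f g).trans (hf g hg))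
      φ.isClosed_ker
  have hff : inner 𝕜 (toLp 2 μ 𝕜 f) (toLp 2 μ 𝕜 f) = 0 := hker (hs ▸ Submodule.mem_top)
  rw [inner_self_eq_zero] at hff
  exact toLp_injective μ (hff.trans (map_zero _).symm)

end ContinuousMap

namespace MeasureTheory

theorem integral_intervalIntegral_add_eq_smul {X E : Type*} [AddGroup X] [TopologicalSpace X]
    [IsTopologicalAddGroup X] [CompactSpace X] [SecondCountableTopology X] [MeasurableSpace X]
    [BorelSpace X] [NormedAddCommGroup E] [NormedSpace ℝ E] [CompleteSpace E] (μ : Measure X)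
    [IsFiniteMeasure μ] [μ.IsAddRightInvariant] {g : X → E} (hg : Continuous g) {γ : ℝ → X}
    (hγ : Continuous γ) (a b : ℝ) :
    ∫ x, (∫ t in a..b, g (x + γ t)) ∂μ = (b - a) • ∫ x, g x ∂μ := by
  have : IsFiniteMeasure (volume.restrict (Set.uIoc a b)) := isFiniteMeasure_restrict_Ioc _ _
  obtain ⟨C, hC⟩ := (isCompact_range hg).isBounded.exists_norm_le
  have hint : Integrable (Function.uncurry fun t x => g (x + γ t))
      ((volume.restrict (Set.uIoc a b)).prod μ) :=
    .of_bound (hg.comp (continuous_snd.add (hγ.comp continuous_fst))).aestronglyMeasurable C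
      (.of_forall fun p => hC _ ⟨_, rfl⟩)
  rw [← intervalIntegral_integral_swap hint]
  simp [integral_add_right_eq_self g]

end MeasureTheory

namespace UnitAddTorus

variable {d : Type*}

def proj (d : Type*) : (d → ℝ) →ₜ+ UnitAddTorus d where
  toAddMonoidHom := (QuotientAddGroup.mk' (AddSubgroup.zmultiples (1 : ℝ))).compLeft d
  continuous_toFun := continuous_pi fun i => continuous_quotient_mk'.comp (continuous_apply i)

@[simp]
theorem proj_apply (y : d → ℝ) (i : d) : proj d y i = (y i : UnitAddCircle) := rfl

theorem isOpenQuotientMap_proj : IsOpenQuotientMap (proj d) :=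
  IsOpenQuotientMap.piMap fun _ => QuotientAddGroup.isOpenQuotientMap_mk

theorem exists_eq_add_intCast_of_proj_eq {y z : d → ℝ} (h : proj d y = proj d z) :
    ∃ m : d → ℤ, z = y + fun i => (m i : ℝ) := by
  choose m hm using fun i =>
    AddSubgroup.mem_zmultiples_iff.1 (QuotientAddGroup.eq.1 (congrFun h i))
  exact ⟨m, funext fun i => by simpa using neg_add_eq_iff_eq_add.1 (hm i).symm⟩

theorem exists_continuousMap_proj_eq {E : Type*} [TopologicalSpace E] (f : C(d → ℝ, E))
    (hper : ∀ (y : d → ℝ) (m : d → ℤ), f (y + fun i => (m i : ℝ)) = f y) :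
    ∃ F : C(UnitAddTorus d, E), ∀ y, F (proj d y) = f y := by
  have hfac : Function.FactorsThrough f (proj d) := fun y z h => by
    obtain ⟨m, rfl⟩ := exists_eq_add_intCast_of_proj_eq h
    exact (hper y m).symm
  have hq : Topology.IsQuotientMap (proj d : C(d → ℝ, UnitAddTorus d)) :=
    isOpenQuotientMap_proj.isQuotientMap
  exact ⟨hq.lift f hfac, ContinuousMap.congr_fun (hq.lift_comp f hfac)⟩

def closedGeodesic (v : d → ℤ) (t : ℝ) : UnitAddTorus d := proj d (t • fun i => (v i : ℝ))

theorem continuous_closedGeodesic (v : d → ℤ) : Continuous (closedGeodesic v) :=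
  (proj d).continuous.comp (by fun_prop)

variable [Fintype d]

theorem mFourier_add_apply (k : d → ℤ) (x y : UnitAddTorus d) :
    mFourier k (x + y) = mFourier k x * mFourier k y := by
  simp [mFourier, Finset.prod_mul_distrib, smul_add, AddCircle.toCircle_add]

theorem mFourier_closedGeodesic (k v : d → ℤ) (t : ℝ) :
    mFourier k (closedGeodesic v t) = fourier (k ⬝ᵥ v) (t : UnitAddCircle) := by
  simp only [closedGeodesic, mFourier, ContinuousMap.coe_mk, proj_apply, Pi.smul_apply,
    smul_eq_mul, fourier_coe_apply, ← Complex.exp_sum, dotProduct]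
  congr 1
  push_cast
  simp only [div_one, Finset.mul_sum, Finset.sum_mul]
  exact Finset.sum_congr rfl fun i _ => by ring

theorem integral_mFourier_mul_eq_zero_of_forall_intervalIntegral_eq_zero
    {μ : Measure (UnitAddTorus d)} [IsFiniteMeasure μ] [μ.IsAddRightInvariant]
    {F : C(UnitAddTorus d, ℂ)} {k v : d → ℤ} (hkv : k ⬝ᵥ v = 0)
    (hF : ∀ x, ∫ t in (0 : ℝ)..1, F (x + closedGeodesic v t) = 0) :
    ∫ x, mFourier k x * F x ∂μ = 0 := by
  have hinv (t : ℝ) (x : UnitAddTorus d) :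
      mFourier k (x + closedGeodesic v t) = mFourier k x := by
    rw [mFourier_add_apply, mFourier_closedGeodesic, hkv, fourier_zero, mul_one]
  calc ∫ x, mFourier k x * F x ∂μ
      = ∫ x, (∫ t in (0 : ℝ)..1,
          mFourier k (x + closedGeodesic v t) * F (x + closedGeodesic v t)) ∂μ := by
        simpa using (integral_intervalIntegral_add_eq_smul μ
          ((mFourier k).continuous.mul F.continuous) (continuous_closedGeodesic v) 0 1).symm
    _ = ∫ x, mFourier k x * (∫ t in (0 : ℝ)..1, F (x + closedGeodesic v t)) ∂μ := by
        simp only [hinv, intervalIntegral.integral_const_mul]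
    _ = 0 := by simp [hF]

end UnitAddTorus

/-- Injectivity of the X-ray transform on continuous functions on `𝕋ⁿ`, `n ≥ 2`. -/
theorem xray_injective (n : ℕ) (hn : 2 ≤ n) (f : (Fin n → ℝ) → ℂ)
    (hf : Continuous f)
    (hper : ∀ (x : Fin n → ℝ) (m : Fin n → ℤ), f (x + fun i => (m i : ℝ)) = f x)
    (h : ∀ (x : Fin n → ℝ) (v : Fin n → ℤ), v ≠ 0 →
      (∫ t in (0:ℝ)..1, f (x + t • fun i => (v i : ℝ))) = 0) :
    f = 0 := by
  have : Nontrivial (Fin n) := Fin.nontrivial_iff_two_le.2 hn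
  obtain ⟨F, hF⟩ := UnitAddTorus.exists_continuousMap_proj_eq ⟨f, hf⟩ hper
  have hxray (v : Fin n → ℤ) (hv : v ≠ 0) (x : UnitAddTorus (Fin n)) :
      ∫ t in (0 : ℝ)..1, F (x + UnitAddTorus.closedGeodesic v t) = 0 := by
    obtain ⟨y, rfl⟩ := UnitAddTorus.isOpenQuotientMap_proj.surjective x
    simpa only [UnitAddTorus.closedGeodesic, ← map_add, hF, ContinuousMap.coe_mk] using h y v hv
  have hcoeff (k : Fin n → ℤ) : ∫ x, UnitAddTorus.mFourier k x * F x = 0 := by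
    obtain ⟨v, hv, hvk⟩ := exists_ne_zero_dotProduct_eq_zero k
    exact UnitAddTorus.integral_mFourier_mul_eq_zero_of_forall_intervalIntegral_eq_zero
      (dotProduct_comm v k ▸ hvk) (hxray v hv)
  have hF0 : F = 0 := star_eq_zero.1 <|
    ContinuousMap.eq_zero_of_forall_integral_mul_conj_eq_zero volume
      UnitAddTorus.span_mFourier_closure_eq_top (by rintro _ ⟨k, rfl⟩; simpa using hcoeff k)
  funext y
  simpa [hF0] using (hF y).symm
end

section
/- Range characterization on characters: a function F : ℤ^n \ {0} → C(𝕋^n) is the X-ray transform of some continuous f (i.e., F(v)(x) = ∫₀¹ f(x+tv)dt for all v, x) only if for all k ∈ ℤ^n and all nonzero v, w ∈ ℤ^n with v·k = 0 and w·k = 0, the k-th Fourier coefficients of F(v) and F(w) agree, and for v with v·k ≠ 0 the k-th Fourier coefficient of F(v) vanishes. -/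
/-!
By Fubini, `∫_{[0,1]ⁿ} F(v)(x) e^{-2πik·x} dx = ∫₀¹ ĝₜ(k) dt`, where `gₜ = f(· + t v)`. Since the
integral of a `ℤⁿ`-periodic function over the unit cube is translation invariant,
`ĝₜ(k) = e^{2πi t v·k} f̂(k)`, so `F(v)^(k) = (∫₀¹ e^{2πi t v·k} dt) f̂(k)`; the factor is `1` when
`v·k = 0` and `0` otherwise.
-/

open MeasureTheory Real Submodule Pointwise

def IsIntPeriodic {ι E : Type*} (g : (ι → ℝ) → E) : Prop :=
  ∀ (x : ι → ℝ) (m : ι → ℤ), g (x + fun i => (m i : ℝ)) = g x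

theorem IsIntPeriodic.mul {ι R : Type*} [Mul R] {g h : (ι → ℝ) → R} (hg : IsIntPeriodic g)
    (hh : IsIntPeriodic h) : IsIntPeriodic fun x => g x * h x := fun x m =>
  congrArg₂ (· * ·) (hg x m) (hh x m)

section Translation

variable {ι E : Type*} [Fintype ι]

theorem Icc_ae_eq_fundamentalDomain_basisFun :
    Set.Icc (0 : ι → ℝ) 1 =ᵐ[volume] ZSpan.fundamentalDomain (Pi.basisFun ℝ ι) := by
  rw [ZSpan.fundamentalDomain_pi_basisFun, ← Set.pi_univ_Icc, volume_pi]
  exact (Measure.ae_eq_set_pi fun _ _ => Ico_ae_eq_Icc).symm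

theorem IsIntPeriodic.vadd_span_basisFun {g : (ι → ℝ) → E} (hg : IsIntPeriodic g)
    (l : (span ℤ (Set.range (Pi.basisFun ℝ ι))).toAddSubgroup) (x : ι → ℝ) :
    g (l +ᵥ x) = g x := by
  obtain ⟨l, hl⟩ := l
  choose m hm using ((Pi.basisFun ℝ ι).mem_span_iff_repr_mem ℤ l).mp hl
  have hl_eq : l = fun i => (m i : ℝ) := funext fun i => (hm i).symm
  change g (l + x) = g x
  rw [add_comm, hl_eq]
  exact hg x m

theorem IsIntPeriodic.setIntegral_Icc_comp_add_right [NormedAddCommGroup E] [NormedSpace ℝ E]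
    {g : (ι → ℝ) → E} (hg : IsIntPeriodic g) (c : ι → ℝ) :
    ∫ x in Set.Icc (0 : ι → ℝ) 1, g (x + c) = ∫ x in Set.Icc (0 : ι → ℝ) 1, g x := by
  set D := ZSpan.fundamentalDomain (Pi.basisFun ℝ ι)
  have : Countable (span ℤ (Set.range (Pi.basisFun ℝ ι))).toAddSubgroup :=
    inferInstanceAs (Countable (span ℤ (Set.range (Pi.basisFun ℝ ι))))
  have hD := ZSpan.isAddFundamentalDomain' (Pi.basisFun ℝ ι) (volume : Measure (ι → ℝ))
  calc ∫ x in Set.Icc (0 : ι → ℝ) 1, g (x + c)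
      = ∫ x in D, g (c + x) := by
        simp_rw [add_comm _ c]
        exact setIntegral_congr_set Icc_ae_eq_fundamentalDomain_basisFun
    _ = ∫ x in c +ᵥ D, g x :=
        ((measurePreserving_add_left volume c).setIntegral_image_emb
          (measurableEmbedding_addLeft c) g D).symm
    _ = ∫ x in D, g x := (hD.vadd_of_comm c).setIntegral_eq hD hg.vadd_span_basisFun
    _ = ∫ x in Set.Icc (0 : ι → ℝ) 1, g x :=
        (setIntegral_congr_set Icc_ae_eq_fundamentalDomain_basisFun).symm

end Translation

section Fourier

variable {ι : Type*} [Fintype ι]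

noncomputable def torusChar (k : ι → ℤ) (x : ι → ℝ) : ℂ :=
  Complex.exp (-(2 * π * Complex.I) * ∑ j, (k j : ℂ) * (x j : ℂ))

noncomputable def torusFourierCoeff (g : (ι → ℝ) → ℂ) (k : ι → ℤ) : ℂ :=
  ∫ x in Set.Icc (0 : ι → ℝ) 1, g x * torusChar k x

noncomputable def xrayTransform {E : Type*} [NormedAddCommGroup E] [NormedSpace ℝ E]
    (f : (ι → ℝ) → E) (v : ι → ℤ) (x : ι → ℝ) : E :=
  ∫ t in (0 : ℝ)..1, f (x + t • fun i => (v i : ℝ))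

variable (k : ι → ℤ)

@[fun_prop]
theorem continuous_torusChar : Continuous (torusChar k) := by
  unfold torusChar
  fun_prop

theorem torusChar_add (x y : ι → ℝ) : torusChar k (x + y) = torusChar k x * torusChar k y := by
  rw [torusChar, torusChar, torusChar, ← Complex.exp_add, ← mul_add, ← Finset.sum_add_distrib]
  simp only [Pi.add_apply, Complex.ofReal_add, mul_add]

theorem torusChar_smul_intCast (t : ℝ) (v : ι → ℤ) :
    torusChar k (t • fun i => (v i : ℝ)) =
      Complex.exp (-(2 * π * Complex.I * ((∑ i, v i * k i : ℤ) : ℂ) * t)) := by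
  rw [torusChar]
  congr 1
  simp only [Pi.smul_apply, smul_eq_mul, Complex.ofReal_mul, Complex.ofReal_intCast, Int.cast_sum,
    Int.cast_mul, Finset.mul_sum, Finset.sum_mul, ← Finset.sum_neg_distrib]
  exact Finset.sum_congr rfl fun i _ => by ring

theorem isIntPeriodic_torusChar : IsIntPeriodic (torusChar k) := by
  intro x m
  rw [torusChar_add, ← one_smul ℝ fun i => (m i : ℝ), torusChar_smul_intCast, Complex.ofReal_one,
    mul_one, ← mul_neg, ← Int.cast_neg, mul_comm (2 * π * Complex.I),
    Complex.exp_int_mul_two_pi_mul_I, mul_one]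

theorem integral_exp_two_pi_I_int_mul (S : ℤ) :
    ∫ t in (0 : ℝ)..1, Complex.exp (2 * π * Complex.I * S * t) = if S = 0 then 1 else 0 := by
  split_ifs with hS
  · simp [hS]
  · have hc : 2 * π * Complex.I * S ≠ 0 := by simp [hS, pi_ne_zero]
    rw [integral_exp_mul_complex hc, Complex.ofReal_one, mul_one, mul_comm,
      Complex.exp_int_mul_two_pi_mul_I, Complex.ofReal_zero, mul_zero, Complex.exp_zero, sub_self,
      zero_div]

theorem torusFourierCoeff_comp_add_right {f : (ι → ℝ) → ℂ} (hper : IsIntPeriodic f) (c : ι → ℝ) :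
    torusFourierCoeff (fun x => f (x + c)) k = torusChar k (-c) * torusFourierCoeff f k := by
  have hsplit (x : ι → ℝ) :
      f (x + c) * torusChar k x = f (x + c) * torusChar k (x + c) * torusChar k (-c) := by
    rw [mul_assoc, ← torusChar_add, add_neg_cancel_right]
  simp only [torusFourierCoeff, hsplit, integral_mul_const]
  rw [(hper.mul (isIntPeriodic_torusChar k)).setIntegral_Icc_comp_add_right, mul_comm]

theorem torusFourierCoeff_xrayTransform {f : (ι → ℝ) → ℂ} (hf : Continuous f)
    (hper : IsIntPeriodic f) (v : ι → ℤ) :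
    torusFourierCoeff (xrayTransform f v) k =
      if ∑ i, v i * k i = 0 then torusFourierCoeff f k else 0 := by
  set V : ι → ℝ := fun i => (v i : ℝ)
  have hshift (t : ℝ) : ∫ x in Set.Icc (0 : ι → ℝ) 1, f (x + t • V) * torusChar k x =
      Complex.exp (2 * π * Complex.I * ((∑ i, v i * k i : ℤ) : ℂ) * t) * torusFourierCoeff f k := by
    rw [← torusFourierCoeff, torusFourierCoeff_comp_add_right k hper, ← neg_smul,
      torusChar_smul_intCast, Complex.ofReal_neg, mul_neg, neg_neg]
  have hint : Integrable (Function.uncurry fun x t => f (x + t • V) * torusChar k x)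
      ((volume.restrict (Set.Icc (0 : ι → ℝ) 1)).prod (volume.restrict (Set.Ioc (0 : ℝ) 1))) := by
    rw [Measure.prod_restrict, ← Measure.volume_eq_prod]
    refine IntegrableOn.mono_set ?_ (Set.prod_mono_right Set.Ioc_subset_Icc_self)
    exact ContinuousOn.integrableOn_compact (isCompact_Icc.prod isCompact_Icc) (by fun_prop)
  calc torusFourierCoeff (xrayTransform f v) k
      = ∫ x in Set.Icc (0 : ι → ℝ) 1, ∫ t in Set.Ioc (0 : ℝ) 1, f (x + t • V) * torusChar k x := by
        simp only [torusFourierCoeff, xrayTransform, intervalIntegral.integral_of_le zero_le_one,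
          integral_mul_const]
        rfl
    _ = ∫ t in Set.Ioc (0 : ℝ) 1, ∫ x in Set.Icc (0 : ι → ℝ) 1, f (x + t • V) * torusChar k x :=
        integral_integral_swap hint
    _ = (∫ t in (0 : ℝ)..1, Complex.exp (2 * π * Complex.I * ((∑ i, v i * k i : ℤ) : ℂ) * t)) *
          torusFourierCoeff f k := by
        simp only [hshift, integral_mul_const, intervalIntegral.integral_of_le zero_le_one]
    _ = _ := by rw [integral_exp_two_pi_I_int_mul, ite_mul, one_mul, zero_mul]

end Fourier

/-- Range characterization on characters: if `F(v) = Rf(·,v)` for a continuous `f` on `𝕋ⁿ`,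
then for each `k` the `k`-th Fourier coefficients of `F(v)` agree for all nonzero `v ⊥ k`,
and vanish whenever `v·k ≠ 0`. -/
theorem xray_range_characterization (n : ℕ) (f : (Fin n → ℝ) → ℂ)
    (hf : Continuous f)
    (hper : ∀ (x : Fin n → ℝ) (m : Fin n → ℤ), f (x + fun i => (m i : ℝ)) = f x)
    (F : (Fin n → ℤ) → ((Fin n → ℝ) → ℂ))
    (hF : ∀ v : Fin n → ℤ, v ≠ 0 → ∀ x : Fin n → ℝ,
      F v x = ∫ t in (0:ℝ)..1, f (x + t • fun i => (v i : ℝ))) :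
    ∀ k : Fin n → ℤ,
      (∀ v w : Fin n → ℤ, v ≠ 0 → w ≠ 0 →
        (∑ i, v i * k i) = 0 → (∑ i, w i * k i) = 0 →
        (∫ x in Set.Icc (0 : Fin n → ℝ) 1,
            F v x * Complex.exp (-(2 * π * Complex.I) * ∑ j, (k j : ℂ) * (x j : ℂ))) =
          ∫ x in Set.Icc (0 : Fin n → ℝ) 1,
            F w x * Complex.exp (-(2 * π * Complex.I) * ∑ j, (k j : ℂ) * (x j : ℂ))) ∧
      (∀ v : Fin n → ℤ, v ≠ 0 → (∑ i, v i * k i) ≠ 0 →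
        (∫ x in Set.Icc (0 : Fin n → ℝ) 1,
            F v x * Complex.exp (-(2 * π * Complex.I) * ∑ j, (k j : ℂ) * (x j : ℂ))) = 0) := by
  intro k
  have hcoeff (v : Fin n → ℤ) (hv : v ≠ 0) :
      torusFourierCoeff (F v) k = if ∑ i, v i * k i = 0 then torusFourierCoeff f k else 0 := by
    rw [show F v = xrayTransform f v from funext (hF v hv)]
    exact torusFourierCoeff_xrayTransform k hf hper v
  refine ⟨fun v w hv hw hvk hwk => ?_, fun v hv hvk => (hcoeff v hv).trans (if_neg hvk)⟩
  change torusFourierCoeff (F v) k = torusFourierCoeff (F w) k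
  rw [hcoeff v hv, hcoeff w hw, if_pos hvk, if_pos hwk]
end
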